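/- Let a < b and c < d be real numbers, Δ = [a,b] × [c,d], let f : Δ → ℝ be (L₁, L₂)-Lipschitz on Δ with L₁, L₂ > 0, and define H : [0,1] × [0,1] → ℝ by H(t,s) = (1/((b-a)(d-c))) ∫_a^b ∫_c^d f(t·x + (1-t)·(a+b)/2, s·y + (1-s)·(c+d)/2) dy dx. Then for all t, s ∈ [0,1], |H(t,s) − (1/((b-a)(d-c))) ∫_a^b ∫_c^d f(x,y) dy dx| ≤ (L₁·(1-t)/4)·(b-a) + (L₂·(1-s)/4)·(d-c). -/

import Mathlib

/-!
The homothety `x ↦ t x + (1 - t) m` towards the midpoint `m` moves `x` by `(1 - t) |x - m|`, so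
the integrand of `H(t,s)` differs from `f (x, y)` by at most
`L₁ (1 - t) |x - m| + L₂ (1 - s) |y - n|`. Integrating over the rectangle and using
`∫_a^b |x - (a+b)/2| dx = (b - a)² / 4` gives the bound. Integrability of the iterated integrals
comes from the Lipschitz condition: the inner integral is Lipschitz in the outer variable.
-/

open MeasureTheory Set intervalIntegral

def LipschitzOnRect (L₁ L₂ : ℝ) (s t : Set ℝ) (f : ℝ → ℝ → ℝ) : Prop :=
  ∀ x₁ ∈ s, ∀ x₂ ∈ s, ∀ y₁ ∈ t, ∀ y₂ ∈ t,
    |f x₁ y₁ - f x₂ y₂| ≤ L₁ * |x₁ - x₂| + L₂ * |y₁ - y₂|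

lemma integral_abs_sub_midpoint {a b : ℝ} (hab : a ≤ b) :
    ∫ x in a..b, |x - (a + b) / 2| = (b - a) ^ 2 / 4 := by
  set m := (a + b) / 2 with hm
  have hcont : Continuous fun x : ℝ => |x - m| := by fun_prop
  rw [← integral_add_adjacent_intervals (hcont.intervalIntegrable a m)
    (hcont.intervalIntegrable m b)]
  have hleft : ∫ x in a..m, |x - m| = ∫ x in a..m, (m - x) := by
    refine integral_congr fun x hx => ?_
    rw [uIcc_of_le (by linarith)] at hx
    simp only [abs_of_nonpos (sub_nonpos.2 hx.2), neg_sub]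
  have hright : ∫ x in m..b, |x - m| = ∫ x in m..b, (x - m) := by
    refine integral_congr fun x hx => ?_
    rw [uIcc_of_le (by linarith)] at hx
    simp only [abs_of_nonneg (sub_nonneg.2 hx.1)]
  rw [hleft, hright, integral_sub intervalIntegrable_const intervalIntegrable_id,
    integral_sub intervalIntegrable_id intervalIntegrable_const]
  simp only [integral_id, intervalIntegral.integral_const, smul_eq_mul, hm]
  ring

lemma homothety_mem_Icc {a b t x m : ℝ} (ht : t ∈ Icc (0 : ℝ) 1) (hx : x ∈ Icc a b)
    (hm : m ∈ Icc a b) : t * x + (1 - t) * m ∈ Icc a b := by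
  simpa using convex_Icc a b hx hm ht.1 (sub_nonneg.2 ht.2) (by ring)

namespace LipschitzOnRect

variable {L₁ L₂ a b c d : ℝ} {s : Set ℝ} {f : ℝ → ℝ → ℝ}

lemma intervalIntegrable_right (hf : LipschitzOnRect L₁ L₂ s (Icc c d) f) (hcd : c ≤ d)
    {x : ℝ} (hx : x ∈ s) : IntervalIntegrable (f x) volume c d := by
  refine ContinuousOn.intervalIntegrable_of_Icc hcd (LipschitzOnWith.continuousOn
    (K := L₂.toNNReal) (LipschitzOnWith.of_dist_le' fun y₁ hy₁ y₂ hy₂ => ?_))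
  simpa [Real.dist_eq] using hf x hx x hx y₁ hy₁ y₂ hy₂

lemma lipschitzOnWith_integral (hf : LipschitzOnRect L₁ L₂ s (Icc c d) f) (hcd : c ≤ d) :
    LipschitzOnWith (L₁ * (d - c)).toNNReal (fun x => ∫ y in c..d, f x y) s := by
  refine LipschitzOnWith.of_dist_le' fun x₁ hx₁ x₂ hx₂ => ?_
  rw [dist_eq_norm, ← integral_sub (hf.intervalIntegrable_right hcd hx₁)
    (hf.intervalIntegrable_right hcd hx₂), Real.dist_eq]
  calc ‖∫ y in c..d, (f x₁ y - f x₂ y)‖ ≤ L₁ * |x₁ - x₂| * |d - c| :=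
        norm_integral_le_of_norm_le_const fun y hy => by
          rw [uIoc_of_le hcd] at hy
          have hy' := Ioc_subset_Icc_self hy
          simpa using hf x₁ hx₁ x₂ hx₂ y hy' y hy'
    _ = L₁ * (d - c) * |x₁ - x₂| := by rw [abs_of_nonneg (sub_nonneg.2 hcd)]; ring

lemma intervalIntegrable_integral (hf : LipschitzOnRect L₁ L₂ (Icc a b) (Icc c d) f)
    (hab : a ≤ b) (hcd : c ≤ d) :
    IntervalIntegrable (fun x => ∫ y in c..d, f x y) volume a b :=
  (hf.lipschitzOnWith_integral hcd).continuousOn.intervalIntegrable_of_Icc hab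

variable {m n t u : ℝ}

lemma comp_homothety (hf : LipschitzOnRect L₁ L₂ (Icc a b) (Icc c d) f)
    (hm : m ∈ Icc a b) (hn : n ∈ Icc c d) (ht : t ∈ Icc (0 : ℝ) 1)
    (hu : u ∈ Icc (0 : ℝ) 1) :
    LipschitzOnRect (L₁ * t) (L₂ * u) (Icc a b) (Icc c d)
      (fun x y => f (t * x + (1 - t) * m) (u * y + (1 - u) * n)) := by
  intro x₁ hx₁ x₂ hx₂ y₁ hy₁ y₂ hy₂
  have h := hf _ (homothety_mem_Icc ht hx₁ hm) _ (homothety_mem_Icc ht hx₂ hm)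
    _ (homothety_mem_Icc hu hy₁ hn) _ (homothety_mem_Icc hu hy₂ hn)
  rwa [show t * x₁ + (1 - t) * m - (t * x₂ + (1 - t) * m) = t * (x₁ - x₂) by ring,
    show u * y₁ + (1 - u) * n - (u * y₂ + (1 - u) * n) = u * (y₁ - y₂) by ring,
    abs_mul, abs_mul, abs_of_nonneg ht.1, abs_of_nonneg hu.1, ← mul_assoc, ← mul_assoc] at h

lemma abs_comp_homothety_sub_le (hf : LipschitzOnRect L₁ L₂ (Icc a b) (Icc c d) f)
    (hm : m ∈ Icc a b) (hn : n ∈ Icc c d) (ht : t ∈ Icc (0 : ℝ) 1)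
    (hu : u ∈ Icc (0 : ℝ) 1)
    {x y : ℝ} (hx : x ∈ Icc a b) (hy : y ∈ Icc c d) :
    |f (t * x + (1 - t) * m) (u * y + (1 - u) * n) - f x y| ≤
      L₁ * (1 - t) * |x - m| + L₂ * (1 - u) * |y - n| := by
  have h := hf _ (homothety_mem_Icc ht hx hm) _ hx _ (homothety_mem_Icc hu hy hn) _ hy
  rwa [show t * x + (1 - t) * m - x = (1 - t) * (m - x) by ring,
    show u * y + (1 - u) * n - y = (1 - u) * (n - y) by ring,
    abs_mul, abs_mul, abs_of_nonneg (sub_nonneg.2 ht.2), abs_of_nonneg (sub_nonneg.2 hu.2),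
    abs_sub_comm m, abs_sub_comm n, ← mul_assoc, ← mul_assoc] at h

end LipschitzOnRect

theorem abs_integral_integral_sub_le {L₁ L₂ L₁' L₂' a b c d : ℝ}
    {F G : ℝ → ℝ → ℝ} {p q : ℝ → ℝ}
    (hF : LipschitzOnRect L₁ L₂ (Icc a b) (Icc c d) F)
    (hG : LipschitzOnRect L₁' L₂' (Icc a b) (Icc c d) G) (hab : a ≤ b) (hcd : c ≤ d)
    (hp : IntervalIntegrable p volume a b) (hq : IntervalIntegrable q volume c d)
    (hbound : ∀ x ∈ Icc a b, ∀ y ∈ Icc c d, |F x y - G x y| ≤ p x + q y) :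
    |(∫ x in a..b, ∫ y in c..d, F x y) - ∫ x in a..b, ∫ y in c..d, G x y| ≤
      (d - c) * (∫ x in a..b, p x) + (b - a) * ∫ y in c..d, q y := by
  have hinner : ∀ x ∈ Icc a b,
      ‖(∫ y in c..d, F x y) - ∫ y in c..d, G x y‖ ≤
        (d - c) * p x + ∫ y in c..d, q y := by
    intro x hx
    rw [← integral_sub (hF.intervalIntegrable_right hcd hx)
      (hG.intervalIntegrable_right hcd hx)]
    calc ‖∫ y in c..d, (F x y - G x y)‖ ≤ ∫ y in c..d, (p x + q y) :=
          norm_integral_le_of_norm_le hcd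
            (ae_of_all _ fun y hy => hbound x hx y (Ioc_subset_Icc_self hy))
            (intervalIntegrable_const.add hq)
      _ = (d - c) * p x + ∫ y in c..d, q y := by
          rw [integral_add intervalIntegrable_const hq, intervalIntegral.integral_const,
            smul_eq_mul]
  rw [← Real.norm_eq_abs, ← integral_sub (hF.intervalIntegrable_integral hab hcd)
    (hG.intervalIntegrable_integral hab hcd)]
  calc _ ≤ ∫ x in a..b, ((d - c) * p x + ∫ y in c..d, q y) :=
        norm_integral_le_of_norm_le hab
          (ae_of_all _ fun x hx => hinner x (Ioc_subset_Icc_self hx))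
          ((hp.const_mul _).add intervalIntegrable_const)
    _ = _ := by
        rw [integral_add (hp.const_mul _) intervalIntegrable_const,
          intervalIntegral.integral_const_mul, intervalIntegral.integral_const, smul_eq_mul]

theorem mapping_H_integral_bound_general
    (a b c d L₁ L₂ : ℝ) (hab : a < b) (hcd : c < d)
    (f : ℝ → ℝ → ℝ)
    (hf : ∀ t₁ ∈ Icc a b, ∀ t₂ ∈ Icc a b, ∀ s₁ ∈ Icc c d, ∀ s₂ ∈ Icc c d,
      |f t₁ s₁ - f t₂ s₂| ≤ L₁ * |t₁ - t₂| + L₂ * |s₁ - s₂|)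
    (H : ℝ → ℝ → ℝ)
    (hH : ∀ t s, H t s = (1 / ((b - a) * (d - c))) *
      ∫ x in a..b, ∫ y in c..d,
        f (t * x + (1 - t) * ((a + b) / 2)) (s * y + (1 - s) * ((c + d) / 2))) :
    ∀ t ∈ Icc (0:ℝ) 1, ∀ s ∈ Icc (0:ℝ) 1,
      |H t s - (1 / ((b - a) * (d - c))) * ∫ x in a..b, ∫ y in c..d, f x y| ≤
        (L₁ * (1 - t) / 4) * (b - a) + (L₂ * (1 - s) / 4) * (d - c) := by
  intro t ht s hs
  have hf : LipschitzOnRect L₁ L₂ (Icc a b) (Icc c d) f := hf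
  have hm : (a + b) / 2 ∈ Icc a b := ⟨by linarith, by linarith⟩
  have hn : (c + d) / 2 ∈ Icc c d := ⟨by linarith, by linarith⟩
  have hba : 0 < b - a := sub_pos.2 hab
  have hdc : 0 < d - c := sub_pos.2 hcd
  have key := abs_integral_integral_sub_le (hf.comp_homothety hm hn ht hs) hf hab.le hcd.le
    (Continuous.intervalIntegrable (by fun_prop) _ _)
    (Continuous.intervalIntegrable (by fun_prop) _ _)
    fun x hx y hy => hf.abs_comp_homothety_sub_le hm hn ht hs hx hy
  rw [intervalIntegral.integral_const_mul, intervalIntegral.integral_const_mul,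
    integral_abs_sub_midpoint hab.le, integral_abs_sub_midpoint hcd.le] at key
  rw [hH, ← mul_sub, abs_mul, abs_of_pos (by positivity)]
  calc _ ≤ 1 / ((b - a) * (d - c)) * ((d - c) * (L₁ * (1 - t) * ((b - a) ^ 2 / 4)) +
        (b - a) * (L₂ * (1 - s) * ((d - c) ^ 2 / 4))) :=
        mul_le_mul_of_nonneg_left key (by positivity)
    _ = _ := by field_simp

/-- Theorem 7(ii), inequality (3.2): for the mapping
`H(t,s) = (1/((b-a)(d-c))) ∫_a^b ∫_c^d f(tx+(1-t)(a+b)/2, sy+(1-s)(c+d)/2) dy dx`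
associated with an `(L₁, L₂)`-Lipschitz function `f` on `[a,b] × [c,d]`,
`|H(t,s) − (1/((b-a)(d-c))) ∫∫ f| ≤ (L₁(1-t)/4)(b-a) + (L₂(1-s)/4)(d-c)`
for `t,s ∈ [0,1]`. -/
theorem mapping_H_integral_bound
    (a b c d L₁ L₂ : ℝ) (hab : a < b) (hcd : c < d) (hL₁ : 0 < L₁) (hL₂ : 0 < L₂)
    (f : ℝ → ℝ → ℝ)
    (hf : ∀ t₁ ∈ Icc a b, ∀ t₂ ∈ Icc a b, ∀ s₁ ∈ Icc c d, ∀ s₂ ∈ Icc c d,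
      |f t₁ s₁ - f t₂ s₂| ≤ L₁ * |t₁ - t₂| + L₂ * |s₁ - s₂|)
    (H : ℝ → ℝ → ℝ)
    (hH : ∀ t s, H t s = (1 / ((b - a) * (d - c))) *
      ∫ x in a..b, ∫ y in c..d,
        f (t * x + (1 - t) * ((a + b) / 2)) (s * y + (1 - s) * ((c + d) / 2))) :
    ∀ t ∈ Icc (0:ℝ) 1, ∀ s ∈ Icc (0:ℝ) 1,
      |H t s - (1 / ((b - a) * (d - c))) * ∫ x in a..b, ∫ y in c..d, f x y| ≤
        (L₁ * (1 - t) / 4) * (b - a) + (L₂ * (1 - s) / 4) * (d - c) :=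
  mapping_H_integral_bound_general a b c d L₁ L₂ hab hcd f hf H hH
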